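/- arXiv:2408.00562 — 3 statements merged into one kernel-verified Lean document; each statement's English description precedes it below -/
import Mathlib

section
/- Cayley's theorem for groupoids: Let C be a groupoid (a category in which every morphism is an isomorphism) whose objects and arrows form sets, and let Arr(C) denote the set of all arrows of C, i.e. the sigma type Σ (x y : C), (x ⟶ y). Let Sym(X) denote the symmetric groupoid of a set X: the groupoid whose objects are the subsets A : Set X and whose morphisms from A to B are the bijections ↥A ≃ ↥B, with composition of bijections as composition. Then there exists a functor F : C ⥤ Sym(Arr(C)) which is injective on objects and faithful (injective on each hom-set); hence C is isomorphic to a subgroupoid of the symmetric groupoid of its arrow set. -/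
open CategoryTheory

universe u v

/-- The symmetric groupoid of a set `X`: objects are subsets of `X`,
morphisms from `A` to `B` are the bijections `↥A ≃ ↥B`. -/
def SymGroupoid (X : Type u) : Type u := Set X

instance (X : Type u) : Groupoid (SymGroupoid X) where
  Hom A B := Set.Elem A ≃ Set.Elem B
  id A := Equiv.refl (Set.Elem A)
  comp f g := f.trans g
  inv f := f.symm
  inv_comp f := Equiv.symm_trans_self f
  comp_inv f := Equiv.self_trans_symm f

/-! The regular representation: an object `x` goes to the set of arrows with source `x`, and
`f : x ⟶ y` acts on it by `g ↦ f⁻¹ ≫ g`. The image of `𝟙 x` under `f` is `f⁻¹`, which makes the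
functor faithful, and `𝟙 x` has source `x`, which makes it injective on objects. -/

namespace CategoryTheory.Groupoid

variable {C : Type u} [Groupoid.{v} C]

def arrowsFrom (x : C) : Set (Σ (x y : C), x ⟶ y) := {a | a.1 = x}

def arrowsFromEquiv (x : C) : arrowsFrom x ≃ Σ z, x ⟶ z := Equiv.sigmaSubtype x

def precompInvEquiv {x y : C} (f : x ⟶ y) : (Σ z, x ⟶ z) ≃ Σ z, y ⟶ z :=
  Equiv.sigmaCongrRight fun _ => ((isoEquivHom x y).symm f).homFromEquiv

def cayleyMap {x y : C} (f : x ⟶ y) : arrowsFrom x ≃ arrowsFrom y :=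
  (arrowsFromEquiv x).trans ((precompInvEquiv f).trans (arrowsFromEquiv y).symm)

@[simp]
lemma cayleyMap_apply {x y : C} (f : x ⟶ y) (z : C) (g : x ⟶ z) :
    cayleyMap f ⟨⟨x, z, g⟩, rfl⟩ = ⟨⟨y, z, inv f ≫ g⟩, rfl⟩ :=
  rfl

def cayley : C ⥤ SymGroupoid (Σ (x y : C), x ⟶ y) where
  obj := arrowsFrom
  map := cayleyMap
  map_id x := Equiv.ext <| by
    rintro ⟨⟨x, z, g⟩, rfl : x = _⟩
    show cayleyMap (𝟙 x) _ = ⟨⟨x, z, g⟩, rfl⟩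
    simp
  map_comp f g := Equiv.ext <| by
    rintro ⟨⟨x, z, h⟩, rfl : x = _⟩
    show cayleyMap (f ≫ g) _ = cayleyMap g (cayleyMap f _)
    simp

lemma arrowsFrom_injective : Function.Injective (arrowsFrom : C → _) := fun x y h =>
  (h ▸ rfl : (⟨x, x, 𝟙 x⟩ : Σ (x y : C), x ⟶ y) ∈ arrowsFrom y)

instance : (cayley : C ⥤ _).Faithful where
  map_injective {x y} f g (h : cayleyMap f = cayleyMap g) := IsIso.inv_eq_inv.mp <| by
    simpa using congrArg (fun e : arrowsFrom x ≃ arrowsFrom y => e ⟨⟨x, x, 𝟙 x⟩, rfl⟩) h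

end CategoryTheory.Groupoid

/-- Cayley's theorem for groupoids: every groupoid embeds (injectively on
objects and faithfully) into the symmetric groupoid of its set of arrows. -/
theorem groupoid_cayley (C : Type u) [Groupoid.{v} C] :
    ∃ F : C ⥤ SymGroupoid (Σ (x y : C), x ⟶ y),
      Function.Injective F.obj ∧ F.Faithful :=
  ⟨Groupoid.cayley, Groupoid.arrowsFrom_injective, inferInstance⟩
end

section
/- Let C and D be groupoids and F : C ⥤ D a strong functor (if F.obj of the target of an arrow f equals F.obj of the source of an arrow g, then the target of f equals the source of g) which is surjective, meaning F.obj is surjective on objects and F is full. If N is a normal subgroupoid of C, then the image of N under F is a normal subgroupoid of D: the subgroupoid H' of D whose arrows from a to b are the g : a ⟶ b of the form g = eqToHom hx.symm ≫ F.map f ≫ eqToHom hy for some f ∈ N.arrows x y and equalities hx : F.obj x = a, hy : F.obj y = b, satisfies Subgroupoid.IsNormal. -/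
open CategoryTheory

universe u₁ u₂ v₁ v₂

/-- The image of a normal subgroupoid under a surjective strong functor of
groupoids is a normal subgroupoid of the codomain. -/
theorem image_normal_subgroupoid_of_surjective_strong_functor
    (C : Type u₁) (D : Type u₂) [Groupoid.{v₁} C] [Groupoid.{v₂} D] (F : C ⥤ D)
    (hstrong : ∀ {x y z w : C} (_ : x ⟶ y) (_ : z ⟶ w), F.obj y = F.obj z → y = z)
    (hsurj : Function.Surjective F.obj) (hfull : F.Full)
    (N : Subgroupoid C) (hN : N.IsNormal) :
    ∃ H' : Subgroupoid D,
      (∀ (a b : D) (g : a ⟶ b),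
        g ∈ H'.arrows a b ↔
          ∃ (x y : C) (f : x ⟶ y), f ∈ N.arrows x y ∧
            ∃ (hx : F.obj x = a) (hy : F.obj y = b),
              g = eqToHom hx.symm ≫ F.map f ≫ eqToHom hy) ∧
      H'.IsNormal := by
  refine ⟨⟨fun a b => {g | ∃ (x y : C) (f : x ⟶ y), f ∈ N.arrows x y ∧
      ∃ (hx : F.obj x = a) (hy : F.obj y = b),
        g = eqToHom hx.symm ≫ F.map f ≫ eqToHom hy}, ?_, ?_⟩,
      fun a b g => Iff.rfl, ⟨?_⟩, ?_⟩
  · rintro a b g ⟨x, y, f, hf, hx, hy, rfl⟩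
    refine ⟨y, x, Groupoid.inv f, N.inv hf, hy, hx, ?_⟩
    simp [Groupoid.inv_eq_inv]
  · rintro a b e g ⟨x, y, f, hf, hx, hy, rfl⟩ g' ⟨z, w, f', hf', hz, hw, rfl⟩
    obtain rfl : y = z := hstrong f f' (hy.trans hz.symm)
    refine ⟨x, w, f ≫ f', N.mul hf hf', hx, hw, ?_⟩
    simp
  · intro a
    obtain ⟨x, rfl⟩ := hsurj a
    exact ⟨x, x, 𝟙 x, hN.wide x, rfl, rfl, by simp⟩
  · rintro a b p γ ⟨x, y, f, hf, hx, hy, rfl⟩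
    obtain rfl : y = x := hstrong f f (hy.trans hx.symm)
    obtain ⟨b₀, rfl⟩ := hsurj b
    obtain ⟨p', hp'⟩ := hfull.map_surjective (eqToHom hx ≫ p)
    refine ⟨b₀, b₀, Groupoid.inv p' ≫ f ≫ p', hN.conj p' hf, rfl, rfl, ?_⟩
    simp only [Groupoid.inv_eq_inv, Functor.map_comp, Functor.map_inv, hp']
    simp [Groupoid.inv_eq_inv]
end

section
/- Correspondence theorem for normal subgroupoids: Let C and D be groupoids and F : C ⥤ D a surjective strong functor, i.e. F.obj is surjective on objects, F is full, and F is strong (for arrows f : x ⟶ y and g : z ⟶ w, F.obj y = F.obj z implies y = z). Then the map sending a subgroupoid S' of D to Subgroupoid.comap F S' restricts to a bijection from the set of normal subgroupoids of D onto the set of normal subgroupoids S of C satisfying Subgroupoid.ker F ≤ S. -/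
open CategoryTheory

universe u₁ u₂ v₁ v₂

namespace CorrespondenceAux

open CategoryTheory Subgroupoid

variable {C : Type u₁} {D : Type u₂} [Groupoid.{v₁} C] [Groupoid.{v₂} D] (F : C ⥤ D)

/-- The image of a subgroupoid under a strong functor. -/
def imS (hstrong : ∀ {x y z w : C} (_ : x ⟶ y) (_ : z ⟶ w), F.obj y = F.obj z → y = z)
    (S : Subgroupoid C) : Subgroupoid D where
  arrows c d := {g | ∃ (a b : C) (ha : F.obj a = c) (hb : F.obj b = d),
    ∃ f ∈ S.arrows a b, g = eqToHom ha.symm ≫ F.map f ≫ eqToHom hb}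
  inv := by
    rintro c d g ⟨a, b, ha, hb, f, hf, rfl⟩
    refine ⟨b, a, hb, ha, Groupoid.inv f, S.inv hf, ?_⟩
    simp [Groupoid.inv_eq_inv]
  mul := by
    rintro c d e p ⟨a, b, ha, hb, f, hf, rfl⟩ q ⟨a', b', ha', hb', f', hf', rfl⟩
    obtain rfl : b = a' := hstrong f f' (hb.trans ha'.symm)
    refine ⟨a, b', ha, hb', f ≫ f', S.mul hf hf', ?_⟩
    simp

theorem le_comap_imS (hstrong : ∀ {x y z w : C} (_ : x ⟶ y) (_ : z ⟶ w),
      F.obj y = F.obj z → y = z) (S : Subgroupoid C) :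
    S ≤ Subgroupoid.comap F (imS F hstrong S) := by
  rw [Subgroupoid.le_iff]
  rintro a b f hf
  exact ⟨a, b, rfl, rfl, f, hf, by simp⟩

theorem comap_imS_le (hstrong : ∀ {x y z w : C} (_ : x ⟶ y) (_ : z ⟶ w),
      F.obj y = F.obj z → y = z) (S : Subgroupoid C) (hker : Subgroupoid.ker F ≤ S) :
    Subgroupoid.comap F (imS F hstrong S) ≤ S := by
  rw [Subgroupoid.le_iff]
  rintro a b f ⟨a', b', ha', hb', f', hf', hmap⟩
  obtain rfl : a' = a := hstrong (Groupoid.inv f') f ha'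
  obtain rfl : b' = b := hstrong f' (Groupoid.inv f) hb'
  have hmap' : F.map f = F.map f' := by simpa using hmap
  have hk : f ≫ Groupoid.inv f' ∈ (Subgroupoid.ker F).arrows _ _ := by
    rw [Subgroupoid.mem_ker_iff]
    refine ⟨rfl, ?_⟩
    simp [Groupoid.inv_eq_inv, hmap']
  have := S.mul ((Subgroupoid.le_iff _ _).mp hker hk) hf'
  simpa [Groupoid.inv_eq_inv] using this

theorem imS_isNormal (hstrong : ∀ {x y z w : C} (_ : x ⟶ y) (_ : z ⟶ w),
      F.obj y = F.obj z → y = z) (hsurj : Function.Surjective F.obj) (hfull : F.Full)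
    (S : Subgroupoid C) (Sn : S.IsNormal) : (imS F hstrong S).IsNormal := by
  refine { wide := ?_, conj := ?_ }
  · intro d
    obtain ⟨c, rfl⟩ := hsurj d
    exact ⟨c, c, rfl, rfl, 𝟙 c, Sn.wide c, by simp⟩
  · intro c d p γ hγ
    obtain ⟨a, b, ha, hb, f, hf, rfl⟩ := hγ
    obtain rfl : b = a := hstrong f f (hb.trans ha.symm)
    obtain ⟨c₂, hc₂⟩ := hsurj d
    obtain ⟨k, hk⟩ := hfull.map_surjective (eqToHom hb ≫ p ≫ eqToHom hc₂.symm)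
    refine ⟨c₂, c₂, hc₂, hc₂, Groupoid.inv k ≫ f ≫ k, Sn.conj k hf, ?_⟩
    have : eqToHom ha.symm = eqToHom hb.symm := by congr
    simp [Groupoid.inv_eq_inv, hk, this]

theorem comap_le_comap (hsurj : Function.Surjective F.obj) (hfull : F.Full)
    {S₁ S₂ : Subgroupoid D} (h : Subgroupoid.comap F S₁ ≤ Subgroupoid.comap F S₂) :
    S₁ ≤ S₂ := by
  rw [Subgroupoid.le_iff]
  rintro d₁ d₂ g hg
  obtain ⟨c₁, rfl⟩ := hsurj d₁
  obtain ⟨c₂, rfl⟩ := hsurj d₂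
  obtain ⟨k, rfl⟩ := hfull.map_surjective g
  exact (Subgroupoid.le_iff _ _).mp h hg

end CorrespondenceAux

/-- Correspondence theorem for normal subgroupoids: for a surjective strong
functor `F : C ⥤ D` of groupoids, `S' ↦ Subgroupoid.comap F S'` is a bijection
from the set of normal subgroupoids of `D` onto the set of normal subgroupoids
of `C` containing the kernel of `F`. -/
theorem correspondence_theorem_normal_subgroupoids
    (C : Type u₁) (D : Type u₂) [Groupoid.{v₁} C] [Groupoid.{v₂} D] (F : C ⥤ D)
    (hstrong : ∀ {x y z w : C} (_ : x ⟶ y) (_ : z ⟶ w), F.obj y = F.obj z → y = z)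
    (hsurj : Function.Surjective F.obj) (hfull : F.Full) :
    Set.BijOn (fun S' : Subgroupoid D => Subgroupoid.comap F S')
      {S' : Subgroupoid D | S'.IsNormal}
      {S : Subgroupoid C | S.IsNormal ∧ Subgroupoid.ker F ≤ S} := by
  refine ⟨?_, ?_, ?_⟩
  · intro S' hS'
    refine ⟨Subgroupoid.isNormal_comap F hS', ?_⟩
    rw [Subgroupoid.le_iff]
    rintro a b f hf
    rw [Subgroupoid.mem_ker_iff] at hf
    obtain ⟨h, hmap⟩ := hf
    show F.map f ∈ S'.arrows _ _
    rw [hmap]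
    exact hS'.toIsWide.eqToHom_mem h
  · intro S₁ _ S₂ _ h
    exact le_antisymm
      (CorrespondenceAux.comap_le_comap F hsurj hfull (le_of_eq h))
      (CorrespondenceAux.comap_le_comap F hsurj hfull (le_of_eq h.symm))
  · rintro S ⟨Sn, hker⟩
    refine ⟨CorrespondenceAux.imS F hstrong S,
      CorrespondenceAux.imS_isNormal F hstrong hsurj hfull S Sn, ?_⟩
    exact le_antisymm (CorrespondenceAux.comap_imS_le F hstrong S hker)
      (CorrespondenceAux.le_comap_imS F hstrong S)
end
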